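/- For any function f : G → G on a finite group G, N_2(f)/2 - N_3(f)/6 ≤ M_0(f) ≤ N_2(f)/2, with the lower bound an equality if and only if M_r(f) = 0 for all r ≥ 4, and the upper bound an equality if and only if M_r(f) = 0 for all r ≥ 3. -/
import Mathlib


open Finset

variable {G : Type*}

/-- Number of distinct values of `g`. -/
def V [Fintype G] [DecidableEq G] (g : G → G) : ℕ := (univ.image g).card

/-- Permutation resemblance of `f`. -/
noncomputable def pres [Fintype G] [DecidableEq G] [AddGroup G] (f : G → G) : ℕ :=
  sInf {n | ∃ g : G → G, Function.Bijective (fun x => g x + f x) ∧ V g = n}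

/-- Uniformity of `f`: the maximal number of preimages of a point. -/
def uf [Fintype G] [DecidableEq G] (f : G → G) : ℕ :=
  univ.sup fun b => (univ.filter fun x => f x = b).card

/-- `M f r`: number of elements with exactly `r` preimages under `f`. -/
def M [Fintype G] [DecidableEq G] (f : G → G) (r : ℕ) : ℕ :=
  (univ.filter fun b => (univ.filter fun x => f x = b).card = r).card

/-- `N f s`: number of `s`-tuples of pairwise distinct elements on which `f` is constant. -/
noncomputable def N [Fintype G] (f : G → G) (s : ℕ) : ℕ :=
  Nat.card {t : Fin s → G // Function.Injective t ∧ ∀ i j, f (t i) = f (t j)}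

/-! ### Auxiliary lemmas -/

lemma aux_inner_card [Fintype G] [DecidableEq G] (f : G → G) (s : ℕ) (hs : 0 < s) (b : G) :
    Fintype.card {t : Fin s → G // (Function.Injective t ∧ ∀ i j, f (t i) = f (t j)) ∧ f (t ⟨0, hs⟩) = b}
      = ((univ.filter fun x => f x = b).card).descFactorial s := by
  have e : {t : Fin s → G // (Function.Injective t ∧ ∀ i j, f (t i) = f (t j)) ∧ f (t ⟨0, hs⟩) = b}
      ≃ (Fin s ↪ {x : G // f x = b}) :=
    { toFun := fun t => ⟨fun i => ⟨t.1 i, (t.2.1.2 i ⟨0, hs⟩).trans t.2.2⟩,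
        fun i j h => t.2.1.1 (congrArg Subtype.val h)⟩
      invFun := fun e => ⟨fun i => (e i).1,
        ⟨⟨fun i j h => e.injective (Subtype.ext h),
          fun i j => by rw [(e i).2, (e j).2]⟩, (e ⟨0, hs⟩).2⟩⟩
      left_inv := fun t => rfl
      right_inv := fun e => by ext i; rfl }
  rw [Fintype.card_congr e, Fintype.card_embedding_eq, Fintype.card_fin,
    Fintype.card_subtype]

lemma aux_N_sum [Fintype G] [DecidableEq G] (f : G → G) (s : ℕ) (hs : 0 < s) :
    N f s = ∑ b : G, ((univ.filter fun x => f x = b).card).descFactorial s := by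
  rw [N, Nat.card_eq_fintype_card, Fintype.card_subtype]
  rw [Finset.card_eq_sum_card_fiberwise
    (f := fun t : Fin s → G => f (t ⟨0, hs⟩)) (t := univ) (fun _ _ => mem_univ _)]
  refine Finset.sum_congr rfl fun b _ => ?_
  rw [← aux_inner_card f s hs b, Fintype.card_subtype, Finset.filter_filter]

/-- `gq c = max(c-1,0)` as a rational. -/
noncomputable def gq (c : ℕ) : ℚ := if c = 0 then 0 else (c : ℚ) - 1

lemma gq_eq (c : ℕ) : gq c = (c : ℚ) - 1 + (if c = 0 then 1 else 0) := by
  unfold gq; split <;> simp_all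

lemma gq_add (c k : ℕ) : gq (c + k + 1) = (c : ℚ) + k := by
  have : c + k + 1 ≠ 0 := by omega
  rw [gq, if_neg this]; push_cast; ring

lemma aux_sum_gq [Fintype G] [DecidableEq G] (c : G → ℕ)
    (h : ∑ b : G, c b = Fintype.card G) :
    ∑ b : G, gq (c b) = ((univ.filter fun b => c b = 0).card : ℚ) := by
  simp_rw [gq_eq]
  rw [Finset.sum_add_distrib, Finset.sum_sub_distrib, Finset.sum_boole, ← Nat.cast_sum, h]
  simp [Finset.card_univ]

lemma aux_low_le (c : ℕ) :
    ((c.descFactorial 2 : ℚ)) / 2 - (c.descFactorial 3 : ℚ) / 6 ≤ gq c := by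
  match c with
  | 0 => norm_num [gq]
  | 1 => norm_num [gq]
  | 2 => norm_num [gq]
  | 3 => norm_num [gq]
  | (k+4) =>
    have h2 : (k+4).descFactorial 2 = (k+3)*(k+4) := by simp [Nat.descFactorial]
    have h3 : (k+4).descFactorial 3 = (k+2)*((k+3)*(k+4)) := by simp [Nat.descFactorial]
    rw [h2, h3, show k+4 = k+3+1 from rfl, gq_add]
    have hk : (0:ℚ) ≤ (k:ℚ) := Nat.cast_nonneg k
    push_cast
    nlinarith [sq_nonneg ((k:ℚ))]

lemma aux_low_eq_iff (c : ℕ) :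
    ((c.descFactorial 2 : ℚ)) / 2 - (c.descFactorial 3 : ℚ) / 6 = gq c ↔ c ≤ 3 := by
  match c with
  | 0 => norm_num [gq]
  | 1 => norm_num [gq]
  | 2 => norm_num [gq]
  | 3 => norm_num [gq]
  | (k+4) =>
    have h2 : (k+4).descFactorial 2 = (k+3)*(k+4) := by simp [Nat.descFactorial]
    have h3 : (k+4).descFactorial 3 = (k+2)*((k+3)*(k+4)) := by simp [Nat.descFactorial]
    rw [h2, h3, show k+4 = k+3+1 from rfl, gq_add]
    constructor
    · intro h
      exfalso
      have hk : (0:ℚ) ≤ (k:ℚ) := Nat.cast_nonneg k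
      push_cast at h
      nlinarith [sq_nonneg ((k:ℚ))]
    · omega

lemma aux_up_ge (c : ℕ) : gq c ≤ (c.descFactorial 2 : ℚ) / 2 := by
  match c with
  | 0 => norm_num [gq]
  | 1 => norm_num [gq]
  | (k+2) =>
    have h2 : (k+2).descFactorial 2 = (k+1)*(k+2) := by simp [Nat.descFactorial]
    rw [h2, show k+2 = k+1+1 from rfl, gq_add]
    have hk : (0:ℚ) ≤ (k:ℚ) := Nat.cast_nonneg k
    push_cast
    nlinarith

lemma aux_up_eq_iff (c : ℕ) : gq c = (c.descFactorial 2 : ℚ) / 2 ↔ c ≤ 2 := by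
  match c with
  | 0 => norm_num [gq]
  | 1 => norm_num [gq]
  | 2 => norm_num [gq]
  | (k+3) =>
    have h2 : (k+3).descFactorial 2 = (k+2)*(k+3) := by simp [Nat.descFactorial]
    rw [h2, show k+3 = k+2+1 from rfl, gq_add]
    constructor
    · intro h
      exfalso
      have hk : (0:ℚ) ≤ (k:ℚ) := Nat.cast_nonneg k
      push_cast at h
      nlinarith
    · omega

theorem stmt_18 [Fintype G] [DecidableEq G] [AddGroup G] (f : G → G) :
    ((N f 2 : ℚ) / 2 - N f 3 / 6 ≤ M f 0 ∧ (M f 0 : ℚ) ≤ N f 2 / 2) ∧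
    ((N f 2 : ℚ) / 2 - N f 3 / 6 = M f 0 ↔ ∀ r, 4 ≤ r → M f r = 0) ∧
    ((M f 0 : ℚ) = N f 2 / 2 ↔ ∀ r, 3 ≤ r → M f r = 0) := by
  classical
  set c : G → ℕ := fun b => (univ.filter fun x => f x = b).card with hc
  have hsum : ∑ b : G, c b = Fintype.card G := by
    rw [← Finset.card_univ]
    exact (Finset.card_eq_sum_card_fiberwise (fun x _ => mem_univ (f x))).symm
  have hM0 : (M f 0 : ℚ) = ∑ b : G, gq (c b) := by
    rw [aux_sum_gq c hsum]; rfl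
  have hN2 : (N f 2 : ℚ) = ∑ b : G, ((c b).descFactorial 2 : ℚ) := by
    rw [aux_N_sum f 2 (by norm_num)]; push_cast; rfl
  have hN3 : (N f 3 : ℚ) = ∑ b : G, ((c b).descFactorial 3 : ℚ) := by
    rw [aux_N_sum f 3 (by norm_num)]; push_cast; rfl
  have hL : (N f 2 : ℚ) / 2 - (N f 3 : ℚ) / 6
      = ∑ b : G, (((c b).descFactorial 2 : ℚ) / 2 - ((c b).descFactorial 3 : ℚ) / 6) := by
    rw [hN2, hN3, Finset.sum_div, Finset.sum_div, ← Finset.sum_sub_distrib]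
  have hU : (N f 2 : ℚ) / 2 = ∑ b : G, ((c b).descFactorial 2 : ℚ) / 2 := by
    rw [hN2, Finset.sum_div]
  have hMr : ∀ r, (M f r = 0 ↔ ∀ b, c b ≠ r) := by
    intro r
    rw [M, Finset.card_eq_zero, Finset.filter_eq_empty_iff]
    constructor
    · intro h b; exact h (mem_univ b)
    · intro h b _; exact h b
  constructor
  · constructor
    · rw [hL, hM0]
      exact Finset.sum_le_sum fun b _ => aux_low_le (c b)
    · rw [hU, hM0]
      exact Finset.sum_le_sum fun b _ => aux_up_ge (c b)
  constructor
  · rw [hL, hM0]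
    constructor
    · intro h r hr
      rw [hMr r]
      intro b hb
      have h0 : ∑ b : G, (gq (c b)
          - (((c b).descFactorial 2 : ℚ) / 2 - ((c b).descFactorial 3 : ℚ) / 6)) = 0 := by
        rw [Finset.sum_sub_distrib, ← h]; ring
      have := (Finset.sum_eq_zero_iff_of_nonneg
        (fun b _ => sub_nonneg.2 (aux_low_le (c b)))).1 h0 b (mem_univ b)
      have h3 := (aux_low_eq_iff (c b)).1 (sub_eq_zero.1 this).symm
      omega
    · intro h
      refine Finset.sum_congr rfl fun b _ => (aux_low_eq_iff (c b)).2 ?_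
      by_contra hb
      push_neg at hb
      exact ((hMr (c b)).1 (h (c b) (by omega))) b rfl
  · rw [hU, hM0]
    constructor
    · intro h r hr
      rw [hMr r]
      intro b hb
      have h0 : ∑ b : G, (((c b).descFactorial 2 : ℚ) / 2 - gq (c b)) = 0 := by
        rw [Finset.sum_sub_distrib, ← h]; ring
      have := (Finset.sum_eq_zero_iff_of_nonneg
        (fun b _ => sub_nonneg.2 (aux_up_ge (c b)))).1 h0 b (mem_univ b)
      have h3 := (aux_up_eq_iff (c b)).1 (sub_eq_zero.1 this).symm
      omega
    · intro h
      refine Finset.sum_congr rfl fun b _ => (aux_up_eq_iff (c b)).2 ?_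
      by_contra hb
      push_neg at hb
      exact ((hMr (c b)).1 (h (c b) (by omega))) b rfl
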